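/- arXiv:2407.07880 — 3 statements merged into one kernel-verified Lean document; each statement's English description precedes it below -/
import Mathlib

section
/- Let Ω be a finite set, ρ a strictly positive probability mass function on Ω, r: Ω → ℝ, and β > 0. Define L*(ω) = exp(r(ω)/β) / Z where Z = ∑_ω ρ(ω)·exp(r(ω)/β). Then the function π(ω) = ρ(ω)·L*(ω) is a probability mass function on Ω, and for every ω, r(ω) = β·log(π(ω)/ρ(ω)) + β·log(Z). -/
open Real Finset

/-! The tilted weights `ρ ω * exp (r ω / β)` are positive, so dividing them by their total `Z`
gives a probability mass function. On the support of `ρ` the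
likelihood ratio `π / ρ` is `exp (r / β) / Z`, whose logarithm is `r / β - log Z`. -/

theorem Finset.sum_mul_div_sum_mul_eq_one {ι 𝕜 : Type*} [DivisionRing 𝕜] (s : Finset ι)
    (w g : ι → 𝕜) (h : ∑ i ∈ s, w i * g i ≠ 0) :
    ∑ i ∈ s, w i * (g i / ∑ j ∈ s, w j * g j) = 1 := by
  simp only [← mul_div_assoc, ← Finset.sum_div, div_self h]

theorem Real.sum_mul_exp_pos {ι : Type*} [Fintype ι] [Nonempty ι] {w : ι → ℝ}
    (hw : ∀ i, 0 < w i) (f : ι → ℝ) : 0 < ∑ i, w i * exp (f i) :=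
  Finset.sum_pos (fun i _ => mul_pos (hw i) (exp_pos _)) univ_nonempty

theorem Real.log_mul_exp_div_div_self {w x Z : ℝ} (hw : w ≠ 0) (hZ : 0 < Z) :
    log (w * (exp x / Z) / w) = x - log Z := by
  rw [mul_div_cancel_left₀ _ hw, log_div (exp_pos x).ne' hZ.ne', log_exp]

theorem optimal_policy_reward_correspondence_general {Ω : Type*} [Fintype Ω] [Nonempty Ω]
    (ρ : Ω → ℝ) (hρ : ∀ ω, 0 < ρ ω)
    (r : Ω → ℝ) (β : ℝ) (hβ : 0 < β) :
    let Z : ℝ := ∑ ω, ρ ω * Real.exp (r ω / β)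
    let Lstar : Ω → ℝ := fun ω => Real.exp (r ω / β) / Z
    let p : Ω → ℝ := fun ω => ρ ω * Lstar ω
    ((∀ ω, 0 ≤ p ω) ∧ ∑ ω, p ω = 1) ∧
      ∀ ω, r ω = β * Real.log (p ω / ρ ω) + β * Real.log Z := by
  intro Z Lstar p
  have hZ : 0 < Z := sum_mul_exp_pos hρ _
  refine ⟨⟨fun ω => ?_, univ.sum_mul_div_sum_mul_eq_one ρ _ hZ.ne'⟩, fun ω => ?_⟩
  · have := hρ ω
    positivity
  · rw [log_mul_exp_div_div_self (hρ ω).ne' hZ]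
    field_simp
    ring

/-- With `L*(ω) = exp(r(ω)/β)/Z`, `Z = ∑ ρ(ω)·exp(r(ω)/β)`, the function
`π(ω) = ρ(ω)·L*(ω)` is a probability mass function, and
`r(ω) = β·log(π(ω)/ρ(ω)) + β·log Z` for every `ω`. -/
theorem optimal_policy_reward_correspondence {Ω : Type*} [Fintype Ω] [Nonempty Ω]
    (ρ : Ω → ℝ) (hρ : ∀ ω, 0 < ρ ω) (hsum : ∑ ω, ρ ω = 1)
    (r : Ω → ℝ) (β : ℝ) (hβ : 0 < β) :
    let Z : ℝ := ∑ ω, ρ ω * Real.exp (r ω / β)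
    let Lstar : Ω → ℝ := fun ω => Real.exp (r ω / β) / Z
    let p : Ω → ℝ := fun ω => ρ ω * Lstar ω
    ((∀ ω, 0 ≤ p ω) ∧ ∑ ω, p ω = 1) ∧
      ∀ ω, r ω = β * Real.log (p ω / ρ ω) + β * Real.log Z :=
  optimal_policy_reward_correspondence_general ρ hρ r β hβ
end

section
/- Let h₁, …, h_N be real numbers each lying in [a, b] with a ≤ b, and let β' > 0. Define weights w_i = exp(h_i/β') / ((1/N)·∑_{j=1}^N exp(h_j/β')). Then for every i, 0 < w_i ≤ N·exp((b−a)/β') / (N − 1 + exp((b−a)/β')). -/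
/-!
Since every `h j` lies in `[a, b]`, each term `exp (h j / β')` of the sum is at least
`exp (h i / β') / exp ((b - a) / β')`. Keeping the `i`-th term and bounding the other `N - 1`
terms this way bounds the mean from below by a multiple of `exp (h i / β')`, which gives the bound.
-/

open Real Finset

theorem Finset.mul_card_sub_one_add_le_mul_sum {ι R : Type*} [CommRing R] [LinearOrder R]
    [IsStrictOrderedRing R] {s : Finset ι} {i : ι} (hi : i ∈ s) (x : ι → R) (c : R)
    (hle : ∀ j ∈ s, x i ≤ c * x j) :
    x i * ((#s : R) - 1 + c) ≤ c * ∑ j ∈ s, x j := by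
  classical
  have hcard : ((#(s.erase i) : ℕ) : R) = #s - 1 := by
    rw [card_erase_of_mem hi, Nat.cast_sub (card_pos.mpr ⟨i, hi⟩), Nat.cast_one]
  have hrest : (#s - 1 : R) * x i ≤ ∑ j ∈ s.erase i, c * x j := by
    rw [← hcard, ← nsmul_eq_mul, ← sum_const]
    exact sum_le_sum fun j hj => hle j (mem_of_mem_erase hj)
  rw [← mul_sum] at hrest
  rw [← add_sum_erase s x hi]
  linarith

theorem Finset.div_mean_le_of_le_mul {ι : Type*} {s : Finset ι} {i : ι} (hi : i ∈ s)
    {x : ι → ℝ} (hx : ∀ j ∈ s, 0 < x j) {c : ℝ} (hc : 0 < c)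
    (hle : ∀ j ∈ s, x i ≤ c * x j) :
    x i / ((1 / (#s : ℝ)) * ∑ j ∈ s, x j) ≤ #s * c / (#s - 1 + c) := by
  have hcard : (1 : ℝ) ≤ #s := by exact_mod_cast card_pos.mpr ⟨i, hi⟩
  have hsum : 0 < ∑ j ∈ s, x j := sum_pos hx ⟨i, hi⟩
  rw [div_le_div_iff₀ (by positivity) (by linarith)]
  calc x i * ((#s : ℝ) - 1 + c) ≤ c * ∑ j ∈ s, x j := mul_card_sub_one_add_le_mul_sum hi x c hle
    _ = #s * c * ((1 / (#s : ℝ)) * ∑ j ∈ s, x j) := by field_simp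

theorem Real.exp_div_le_exp_sub_div_mul_exp_div {a b u v β : ℝ} (hu : u ≤ b) (hv : a ≤ v)
    (hβ : 0 < β) : exp (u / β) ≤ exp ((b - a) / β) * exp (v / β) := by
  rw [← exp_add, exp_le_exp, ← add_div]
  gcongr
  linarith

theorem drdpo_weight_bounds_general {N : ℕ}
    (h : Fin N → ℝ) (a b : ℝ)
    (hh : ∀ i, h i ∈ Set.Icc a b) (β' : ℝ) (hβ' : 0 < β') :
    let w : Fin N → ℝ := fun i =>
      Real.exp (h i / β') / ((1 / (N : ℝ)) * ∑ j, Real.exp (h j / β'))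
    ∀ i, 0 < w i ∧
      w i ≤ (N : ℝ) * Real.exp ((b - a) / β') /
        ((N : ℝ) - 1 + Real.exp ((b - a) / β')) := by
  intro w i
  have hsum : 0 < ∑ j, exp (h j / β') := sum_pos (fun j _ => exp_pos _) ⟨i, mem_univ i⟩
  have hN : (0 : ℝ) < N := by exact_mod_cast i.pos
  refine ⟨div_pos (exp_pos _) (by positivity), ?_⟩
  simpa [w] using div_mean_le_of_le_mul (mem_univ i) (fun j _ => exp_pos (h j / β'))
    (exp_pos ((b - a) / β'))
    fun j _ => exp_div_le_exp_sub_div_mul_exp_div (hh i).2 (hh j).1 hβ'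

/-- Bounds on the exponential-tilting weights
`w_i = exp(h_i/β') / ((1/N)·∑_j exp(h_j/β'))` for `h_i ∈ [a,b]`. -/
theorem drdpo_weight_bounds {N : ℕ} (hN : 1 ≤ N)
    (h : Fin N → ℝ) (a b : ℝ) (hab : a ≤ b)
    (hh : ∀ i, h i ∈ Set.Icc a b) (β' : ℝ) (hβ' : 0 < β') :
    let w : Fin N → ℝ := fun i =>
      Real.exp (h i / β') / ((1 / (N : ℝ)) * ∑ j, Real.exp (h j / β'))
    ∀ i, 0 < w i ∧
      w i ≤ (N : ℝ) * Real.exp ((b - a) / β') /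
        ((N : ℝ) - 1 + Real.exp ((b - a) / β')) :=
  drdpo_weight_bounds_general h a b hh β' hβ'
end

section
/- Let h₁, …, h_N ∈ [a, b] with 0 ≤ a ≤ b, and β' > 0. Define f(h₁, …, h_N) = (1/N)·∑_{i=1}^N w_i·h_i where w_i = exp(h_i/β') / ((1/N)·∑_j exp(h_j/β')). Then changing a single coordinate h_k to another value h'_k ∈ [a, b] changes f by at most 2·b·exp((b−a)/β') / (N − 1 + exp((b−a)/β')). -/
/-!
Write `u = exp (h k / β')` and let `S`, `T` be the sums of `exp (h i / β')` and
`exp (h i / β') * h i` over `i ≠ k`, so that `f h = (u * h k + T) / (u + S)`. With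
`m = T / S ∈ [0, b]` the mean of the other coordinates, `f h - m = u / (u + S) * (h k - m)`,
so `f h` and `f h'` both lie within `b` times the relative weight `u / (u + S)` of `m`.
As `u ≤ exp (b / β')` and `S ≥ (N - 1) * exp (a / β')`, that weight is at most
`exp ((b - a) / β') / (N - 1 + exp ((b - a) / β'))`.
-/

open Real Finset

lemma mul_sum_div_mul_sum_mul {ι : Type*} (s : Finset ι) {c : ℝ} (hc : c ≠ 0) (e x : ι → ℝ) :
    c * ∑ i ∈ s, e i / (c * ∑ j ∈ s, e j) * x i = (∑ i ∈ s, e i * x i) / ∑ j ∈ s, e j := by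
  simp only [div_mul_eq_mul_div, ← Finset.sum_div, ← mul_div_assoc, mul_div_mul_left _ _ hc]

lemma sum_comp_update_eq_add_sum_erase {ι α M : Type*} [Fintype ι] [DecidableEq ι]
    [AddCommMonoid M] (φ : α → M) (g : ι → α) (k : ι) (y : α) :
    ∑ i, φ (Function.update g k y i) = φ y + ∑ i ∈ univ.erase k, φ (g i) := by
  rw [← add_sum_erase _ _ (mem_univ k), Function.update_self]
  congr 1
  exact sum_congr rfl fun i hi => by rw [Function.update_of_ne (ne_of_mem_erase hi)]

lemma sum_mul_le_mul_sum_of_le {ι : Type*} (s : Finset ι) {w x : ι → ℝ} {b : ℝ}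
    (hw : ∀ i ∈ s, 0 ≤ w i) (hx : ∀ i ∈ s, x i ≤ b) :
    ∑ i ∈ s, w i * x i ≤ b * ∑ i ∈ s, w i := by
  rw [mul_sum]
  exact sum_le_sum fun i hi => by
    rw [mul_comm b]
    exact mul_le_mul_of_nonneg_left (hx i hi) (hw i hi)

lemma sub_one_mul_le_sum_erase {N : ℕ} (k : Fin N) {g : Fin N → ℝ} {c : ℝ} (hg : ∀ i, c ≤ g i) :
    ((N : ℝ) - 1) * c ≤ ∑ i ∈ univ.erase k, g i := by
  have := card_nsmul_le_sum (univ.erase k) g c fun i _ => hg i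
  rwa [card_erase_of_mem (mem_univ k), card_univ, Fintype.card_fin, nsmul_eq_mul,
    Nat.cast_pred k.pos] at this

lemma abs_add_mul_div_add_sub_le {S m b t y : ℝ} (hS : 0 ≤ S) (hm : m ∈ Set.Icc 0 b)
    (ht : 0 < t) (hy : y ∈ Set.Icc 0 b) :
    |(t * y + m * S) / (t + S) - m| ≤ t / (t + S) * b := by
  have hpos : 0 < t + S := by linarith
  have hshift : (t * y + m * S) / (t + S) - m = t / (t + S) * (y - m) := by
    field_simp
    ring
  rw [hshift, abs_mul, abs_of_pos (div_pos ht hpos)]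
  gcongr
  exact abs_sub_le_of_nonneg_of_le hy.1 hy.2 hm.1 hm.2

lemma abs_add_div_add_sub_add_div_add_le {S T b u v x y : ℝ} (hS : 0 ≤ S) (hT : 0 ≤ T)
    (hTS : T ≤ b * S) (hu : 0 < u) (hv : 0 < v) (hx : x ∈ Set.Icc 0 b) (hy : y ∈ Set.Icc 0 b) :
    |(u * x + T) / (u + S) - (v * y + T) / (v + S)| ≤ (u / (u + S) + v / (v + S)) * b := by
  have hb : 0 ≤ b := hx.1.trans hx.2
  -- When `S = 0` also `T = 0`, and the junk value `T / S = 0` still works as the mean.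
  have hTm : T = T / S * S := by
    rcases hS.eq_or_lt with hS0 | hS0
    · rw [← hS0] at hTS ⊢
      simp only [mul_zero, div_zero] at hTS ⊢
      exact le_antisymm hTS hT
    · rw [div_mul_cancel₀ _ hS0.ne']
  have hm : T / S ∈ Set.Icc 0 b := ⟨div_nonneg hT hS, div_le_of_le_mul₀ hS hb hTS⟩
  rw [hTm, ← sub_sub_sub_cancel_right _ _ (T / S), add_mul]
  refine (abs_sub _ _).trans (add_le_add ?_ ?_) <;> exact abs_add_mul_div_add_sub_le hS hm ‹_› ‹_›

lemma div_add_le_div_add {t S c n L : ℝ} (ht : 0 < t) (hL : 0 < L) (htc : t ≤ c * L)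
    (hS : n * L ≤ S) (hn : 0 ≤ n) :
    t / (t + S) ≤ c / (n + c) := by
  have hc : 0 < c := pos_of_mul_pos_left (ht.trans_le htc) hL.le
  rw [div_le_div_iff₀ (by nlinarith) (by linarith)]
  nlinarith [mul_le_mul htc hS (by positivity) (by positivity)]

theorem drdpo_bounded_differences_general {N : ℕ}
    (a b : ℝ) (ha : 0 ≤ a) (β' : ℝ) (hβ' : 0 < β') :
    let f : (Fin N → ℝ) → ℝ := fun h =>
      (1 / (N : ℝ)) * ∑ i,
        (Real.exp (h i / β') / ((1 / (N : ℝ)) * ∑ j, Real.exp (h j / β'))) * h i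
    ∀ (h : Fin N → ℝ), (∀ i, h i ∈ Set.Icc a b) →
      ∀ (k : Fin N) (h'k : ℝ), h'k ∈ Set.Icc a b →
        |f h - f (Function.update h k h'k)| ≤
          2 * b * Real.exp ((b - a) / β') /
            ((N : ℝ) - 1 + Real.exp ((b - a) / β')) := by
  intro f h hmem k y hy
  have hf (g : Fin N → ℝ) : f g = (∑ i, exp (g i / β') * g i) / ∑ i, exp (g i / β') :=
    mul_sum_div_mul_sum_mul _ (by simp [k.pos.ne']) _ _
  have hexp_le {x x' : ℝ} (hx : x ≤ x') : exp (x / β') ≤ exp (x' / β') := by gcongr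
  have hIcc {x : ℝ} (hx : x ∈ Set.Icc a b) : x ∈ Set.Icc 0 b := ⟨ha.trans hx.1, hx.2⟩
  set S := ∑ i ∈ univ.erase k, exp (h i / β')
  set T := ∑ i ∈ univ.erase k, exp (h i / β') * h i
  have hS_ge : ((N : ℝ) - 1) * exp (a / β') ≤ S :=
    sub_one_mul_le_sum_erase k fun i => hexp_le (hmem i).1
  have hT : 0 ≤ T := sum_nonneg fun i _ => mul_nonneg (exp_pos _).le (hIcc (hmem i)).1
  have hTS : T ≤ b * S :=
    sum_mul_le_mul_sum_of_le _ (fun i _ => (exp_pos _).le) fun i _ => (hmem i).2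
  set W := exp ((b - a) / β') / ((N : ℝ) - 1 + exp ((b - a) / β'))
  have hweight {x : ℝ} (hx : x ∈ Set.Icc a b) : exp (x / β') / (exp (x / β') + S) ≤ W := by
    refine div_add_le_div_add (exp_pos _) (exp_pos _) ?_ hS_ge (by simp [Nat.one_le_cast.mpr k.pos])
    rw [← exp_add, sub_div, sub_add_cancel]
    exact hexp_le hx.2
  rw [hf, hf, sum_comp_update_eq_add_sum_erase (fun x => exp (x / β') * x),
    sum_comp_update_eq_add_sum_erase (fun x => exp (x / β')),
    ← add_sum_erase univ (fun i => exp (h i / β') * h i) (mem_univ k),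
    ← add_sum_erase univ (fun i => exp (h i / β')) (mem_univ k)]
  have hb : 0 ≤ b := ha.trans (hmem k).1 |>.trans (hmem k).2
  calc _ ≤ _ := abs_add_div_add_sub_add_div_add_le (sum_nonneg fun i _ => (exp_pos _).le) hT hTS
        (exp_pos _) (exp_pos _) (hIcc (hmem k)) (hIcc hy)
    _ ≤ (W + W) * b := by gcongr; exacts [hweight (hmem k), hweight hy]
    _ = _ := by ring

/-- Bounded-differences property of the weighted empirical Dr. DPO loss
`f(h) = (1/N)·∑ᵢ wᵢ·hᵢ` with `wᵢ = exp(hᵢ/β') / ((1/N)·∑ⱼ exp(hⱼ/β'))`: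
changing one coordinate within `[a,b]` changes `f` by at most
`2·b·exp((b−a)/β') / (N − 1 + exp((b−a)/β'))`. -/
theorem drdpo_bounded_differences {N : ℕ} (hN : 1 ≤ N)
    (a b : ℝ) (ha : 0 ≤ a) (hab : a ≤ b) (β' : ℝ) (hβ' : 0 < β') :
    let f : (Fin N → ℝ) → ℝ := fun h =>
      (1 / (N : ℝ)) * ∑ i,
        (Real.exp (h i / β') / ((1 / (N : ℝ)) * ∑ j, Real.exp (h j / β'))) * h i
    ∀ (h : Fin N → ℝ), (∀ i, h i ∈ Set.Icc a b) →
      ∀ (k : Fin N) (h'k : ℝ), h'k ∈ Set.Icc a b →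
        |f h - f (Function.update h k h'k)| ≤
          2 * b * Real.exp ((b - a) / β') /
            ((N : ℝ) - 1 + Real.exp ((b - a) / β')) :=
  drdpo_bounded_differences_general a b ha β' hβ'
end
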